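/- Let t be a target distribution with t_1 ≥ t_2 ≥ ⋯ and let M be a positive integer. If p is an M-type distribution minimizing D(q‖t) over all M-type distributions q, then p_i / t_i < e / t_1 for every index i with p_i > 0. In particular, if k is the largest index with p_k > 0, then 1/(M t_k) ≤ e / t_1. -/

import Mathlib

/-- A target distribution: a probability distribution on the positive integers
(indexed here by ℕ) with nonincreasing entries. -/
def IsTargetDist (t : ℕ → ℝ) : Prop :=
  (∀ i, 0 ≤ t i) ∧ (∀ i, t (i + 1) ≤ t i) ∧ HasSum t 1

/-- An `M`-type distribution: every entry is `c_i / M` for a nonnegative integer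
`c_i ≤ M`, and the entries sum to one. -/
def IsMType (M : ℕ) (p : ℕ → ℝ) : Prop :=
  HasSum p 1 ∧ ∃ c : ℕ → ℕ, (∀ i, c i ≤ M) ∧ ∀ i, p i = (c i : ℝ) / M

open Classical in
/-- Informational divergence `D(p‖t) = Σ_{i : p_i > 0} p_i log(p_i / t_i)`
(natural log), valued in the extended reals: it is `⊤` if `p` puts mass where
`t` does not. -/
noncomputable def klE (p t : ℕ → ℝ) : EReal :=
  if ∀ i, 0 < p i → 0 < t i then
    (((∑' i, if 0 < p i then p i * Real.log (p i / t i) else 0 : ℝ) : EReal))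
  else ⊤

/-!
If `p i / t i ≥ e / t j` for some `i ≠ j`, moving one unit `δ = 1/M` of mass from `i` to `j`
gives another `M`-type distribution with strictly smaller divergence. By convexity of
`x ↦ x log (x / s)`, the divergence grows at `j` by less than
`δ (log ((p j + δ) / t j) + 1) ≤ δ (1 - log (t j))`, as `p j + δ ≤ 1`, and drops at `i` by at least
`δ log (p i / t i) ≥ δ (1 - log (t j))`.
-/

open Function Real

theorem mul_log_div_add_sub_mul_log_div_lt {s a δ : ℝ} (hs : 0 < s) (ha : 0 ≤ a) (hδ : 0 < δ) :
    (a + δ) * log ((a + δ) / s) - a * log (a / s) < δ * (log ((a + δ) / s) + 1) := by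
  rcases ha.eq_or_lt with rfl | ha
  · rw [zero_add, zero_mul, sub_zero, mul_add, mul_one]
    linarith
  have hsplit : a * log ((a + δ) / s) - a * log (a / s) = a * log ((a + δ) / a) := by
    rw [← mul_sub, ← log_div (by positivity) (by positivity)]
    field_simp
  have hlog : a * log ((a + δ) / a) < δ :=
    calc a * log ((a + δ) / a) < a * ((a + δ) / a - 1) := by
          gcongr
          exact log_lt_sub_one_of_pos (by positivity) (by
            rw [ne_eq, div_eq_one_iff_eq ha.ne']; linarith)
      _ = δ := by field_simp; ring
  linarith

theorem mul_log_div_sub_sub_mul_log_div_le {s b δ : ℝ} (hs : 0 < s) (hδ : 0 ≤ δ) (hδb : δ ≤ b) :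
    (b - δ) * log ((b - δ) / s) - b * log (b / s) ≤ -(δ * log (b / s)) := by
  rcases hδb.eq_or_lt with rfl | hlt
  · simp
  have hmono : log ((b - δ) / s) ≤ log (b / s) :=
    log_le_log (div_pos (by linarith) hs) (by gcongr; linarith)
  nlinarith [mul_le_mul_of_nonneg_left hmono (sub_nonneg.2 hδb)]

section MoveMass

variable {α : Type*} [DecidableEq α]

def moveMass (p : α → ℝ) (i j : α) (δ : ℝ) : α → ℝ :=
  update (update p j (p j + δ)) i (p i - δ)

theorem HasSum.comp_moveMass {F : ℝ → ℝ → ℝ} {p t : α → ℝ} {a : ℝ} {i j : α} (hij : i ≠ j)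
    (δ : ℝ) (h : HasSum (fun k => F (p k) (t k)) a) :
    HasSum (fun k => F (moveMass p i j δ k) (t k))
      (a + (F (p j + δ) (t j) - F (p j) (t j)) + (F (p i - δ) (t i) - F (p i) (t i))) := by
  have hfun : (fun k => F (moveMass p i j δ k) (t k)) =
      Function.update (Function.update (fun k => F (p k) (t k)) j (F (p j + δ) (t j))) i
        (F (p i - δ) (t i)) := by
    funext k
    simp only [moveMass, update_apply]
    split_ifs <;> subst_vars <;> rfl
  have hval : a + (F (p j + δ) (t j) - F (p j) (t j)) + (F (p i - δ) (t i) - F (p i) (t i)) =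
      F (p i - δ) (t i) - Function.update (fun k => F (p k) (t k)) j (F (p j + δ) (t j)) i +
        (F (p j + δ) (t j) - F (p j) (t j) + a) := by
    rw [update_of_ne hij]
    ring
  rw [hfun, hval]
  exact (h.update j _).update i _

end MoveMass

namespace IsMType

variable {M : ℕ} {p : ℕ → ℝ}

theorem pos (hp : IsMType M p) : 0 < M := by
  obtain ⟨hsum, c, -, hc⟩ := hp
  refine Nat.pos_of_ne_zero fun hM => ?_
  have hp0 : p = 0 := funext fun i => by simp [hc i, hM]
  rw [hp0] at hsum
  exact zero_ne_one (hasSum_zero.unique hsum)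

theorem nonneg (hp : IsMType M p) (i : ℕ) : 0 ≤ p i := by
  obtain ⟨-, c, -, hc⟩ := hp
  rw [hc i]
  positivity

theorem one_div_le (hp : IsMType M p) {i : ℕ} (hi : 0 < p i) : 1 / (M : ℝ) ≤ p i := by
  obtain ⟨-, c, -, hc⟩ := hp
  rw [hc i] at hi ⊢
  have hci : (1 : ℝ) ≤ c i := by
    exact_mod_cast Nat.one_le_iff_ne_zero.2 fun h => by simp [h] at hi
  gcongr

theorem finite_support (hp : IsMType M p) : (support p).Finite := by
  have hM : (0 : ℝ) < 1 / M := one_div_pos.2 (Nat.cast_pos.2 hp.pos)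
  refine Set.Finite.subset (hp.1.summable.tendsto_cofinite_zero.eventually (gt_mem_nhds hM))
    fun i hi => ?_
  exact not_lt.2 (hp.one_div_le ((hp.nonneg i).lt_of_ne (Ne.symm hi)))

theorem single (hM : 0 < M) (j : ℕ) : IsMType M (Pi.single j 1) := by
  refine ⟨hasSum_pi_single j 1, Pi.single j M, fun i => ?_, fun i => ?_⟩
  · rcases eq_or_ne i j with rfl | h <;> simp [*]
  · rcases eq_or_ne i j with rfl | h
    · simp [(Nat.cast_pos.2 hM).ne']
    · simp [h]

theorem moveMass (hp : IsMType M p) {i j : ℕ} (hij : i ≠ j) (hi : 0 < p i) (hj : p j < 1) :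
    IsMType M (moveMass p i j (1 / M)) := by
  have hM : (0 : ℝ) < M := Nat.cast_pos.2 hp.pos
  obtain ⟨hsum, c, hcM, hc⟩ := hp
  have hci : 1 ≤ c i := Nat.one_le_iff_ne_zero.2 fun h => by simp [hc i, h] at hi
  have hcj : c j < M := by
    rw [hc j, div_lt_one hM] at hj
    exact_mod_cast hj
  refine ⟨?_, update (update c j (c j + 1)) i (c i - 1), fun k => ?_, fun k => ?_⟩
  · simpa using hsum.comp_moveMass (F := fun x _ => x) (t := p) hij (1 / M)
  · simp only [update_apply]
    split_ifs
    · exact (Nat.sub_le _ _).trans (hcM i)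
    · exact hcj
    · exact hcM k
  · simp only [_root_.moveMass, update_apply]
    split_ifs
    · rw [hc i, Nat.cast_sub hci]; ring
    · rw [hc j]; push_cast; ring
    · exact hc k

end IsMType

theorem IsTargetDist.pos_zero {t : ℕ → ℝ} (ht : IsTargetDist t) : 0 < t 0 := by
  obtain ⟨hnn, hanti, hsum⟩ := ht
  by_contra! h
  have ht0 : t = 0 := funext fun i =>
    ((antitone_nat_of_succ_le hanti (Nat.zero_le i)).trans h).antisymm (hnn i)
  rw [ht0] at hsum
  exact zero_ne_one (hasSum_zero.unique hsum)

theorem klE_ne_top_iff {p t : ℕ → ℝ} : klE p t ≠ ⊤ ↔ ∀ i, 0 < p i → 0 < t i := by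
  unfold klE
  split_ifs with h
  · simpa using h
  · simpa using h

theorem klE_eq_coe {p t : ℕ → ℝ} {D : ℝ} (hp : ∀ i, 0 ≤ p i) (hpt : ∀ i, 0 < p i → 0 < t i)
    (hD : HasSum (fun i => p i * log (p i / t i)) D) : klE p t = D := by
  unfold klE
  rw [if_pos hpt, ← hD.tsum_eq]
  congr 2
  funext i
  split_ifs with h
  · rfl
  · simp [le_antisymm (not_lt.1 h) (hp i)]

theorem klE_moveMass_lt {p t : ℕ → ℝ} {i j : ℕ} {δ : ℝ} (hp : ∀ i, 0 ≤ p i)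
    (hpt : ∀ k, 0 < p k → 0 < t k) (hfin : (support p).Finite) (hij : i ≠ j) (htj : 0 < t j)
    (hδ : 0 < δ) (hδi : δ ≤ p i) (hratio : exp 1 * ((p j + δ) / t j) ≤ p i / t i) :
    klE (moveMass p i j δ) t < klE p t := by
  have hti : 0 < t i := hpt i (hδ.trans_le hδi)
  have hD : HasSum (fun k => p k * log (p k / t k)) _ :=
    hasSum_sum_of_ne_finset_zero (s := hfin.toFinset) fun k hk => by
      rw [Set.Finite.mem_toFinset, mem_support, not_not] at hk
      simp [hk]
  have hgain := mul_log_div_add_sub_mul_log_div_lt htj (hp j) hδ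
  have hloss := mul_log_div_sub_sub_mul_log_div_le hti hδ.le hδi
  have hlog : log ((p j + δ) / t j) + 1 ≤ log (p i / t i) := by
    have hpj : 0 < p j + δ := by linarith [hp j]
    have := log_le_log (by positivity) hratio
    rwa [log_mul (exp_ne_zero 1) (by positivity), log_exp, add_comm] at this
  have hq : ∀ k, 0 ≤ moveMass p i j δ k := fun k => by
    simp only [moveMass, update_apply]
    split_ifs <;> linarith [hp j, hp k]
  have hqt : ∀ k, 0 < moveMass p i j δ k → 0 < t k := fun k => by
    simp only [moveMass, update_apply]
    split_ifs with hki hkj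
    · exact fun _ => hki ▸ hti
    · exact fun _ => hkj ▸ htj
    · exact hpt k
  rw [klE_eq_coe hq hqt (hD.comp_moveMass (F := fun x s => x * log (x / s)) hij δ),
    klE_eq_coe hp hpt hD, EReal.coe_lt_coe_iff]
  nlinarith [mul_le_mul_of_nonneg_left hlog hδ.le]

theorem klE_ne_top_of_minimizer {M : ℕ} {p t : ℕ → ℝ} (hM : 0 < M) {j : ℕ} (htj : 0 < t j)
    (hopt : ∀ q, IsMType M q → klE p t ≤ klE q t) : klE p t ≠ ⊤ := by
  refine ne_top_of_le_ne_top (klE_ne_top_iff.2 fun i hi => ?_) (hopt _ (IsMType.single hM j))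
  rcases eq_or_ne i j with rfl | h
  · exact htj
  · simp [h] at hi

theorem IsMType.div_lt_exp_div_of_minimizer {M : ℕ} {p t : ℕ → ℝ} (hp : IsMType M p)
    (hopt : ∀ q, IsMType M q → klE p t ≤ klE q t) {i j : ℕ} (hi : 0 < p i) (htj : 0 < t j) :
    p i / t i < exp 1 / t j := by
  have hpt := klE_ne_top_iff.1 (klE_ne_top_of_minimizer hp.pos htj hopt)
  have hpj : p j ≤ 1 := le_hasSum hp.1 j fun k _ => hp.nonneg k
  have hδi := hp.one_div_le hi
  rcases eq_or_ne i j with rfl | hij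
  · calc p i / t i ≤ 1 / t i := by gcongr
      _ < exp 1 / t i := by gcongr; exact one_lt_exp_iff.2 one_pos
  by_contra! hratio
  have hpij : p i + p j ≤ 1 := by
    simpa [Finset.sum_pair hij] using sum_le_hasSum {i, j} (fun k _ => hp.nonneg k) hp.1
  have hδ : (0 : ℝ) < 1 / M := one_div_pos.2 (Nat.cast_pos.2 hp.pos)
  refine (hopt _ (hp.moveMass hij hi (by linarith))).not_gt
    (klE_moveMass_lt hp.nonneg hpt hp.finite_support hij htj hδ hδi ?_)
  calc exp 1 * ((p j + 1 / M) / t j) ≤ exp 1 * (1 / t j) := by gcongr; linarith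
    _ = exp 1 / t j := mul_one_div _ _
    _ ≤ p i / t i := hratio

theorem stmt14_general (t : ℕ → ℝ) (ht : IsTargetDist t) (M : ℕ)
    (p : ℕ → ℝ) (hp : IsMType M p)
    (hopt : ∀ q, IsMType M q → klE p t ≤ klE q t) :
    (∀ i, 0 < p i → p i / t i < Real.exp 1 / t 0) ∧
    ∀ k, 0 < p k → (∀ j, k < j → p j = 0) →
      1 / ((M : ℝ) * t k) ≤ Real.exp 1 / t 0 := by
  have hratio : ∀ i, 0 < p i → p i / t i < exp 1 / t 0 := fun i hi =>
    hp.div_lt_exp_div_of_minimizer hopt hi ht.pos_zero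
  refine ⟨hratio, fun k hk _ => ?_⟩
  have htk : 0 < t k :=
    klE_ne_top_iff.1 (klE_ne_top_of_minimizer hp.pos ht.pos_zero hopt) k hk
  calc 1 / ((M : ℝ) * t k) = 1 / M / t k := by rw [div_div]
    _ ≤ p k / t k := by gcongr; exact hp.one_div_le hk
    _ ≤ exp 1 / t 0 := (hratio k hk).le

/-- any informational-divergence optimal `M`-type approximation `p`
of a target distribution `t` (with largest entry `t 0`) satisfies
`p_i / t_i < e / t_1` for every `i` with `p_i > 0`; in particular, if `k` is the
largest index in the support of `p`, then `1/(M t_k) ≤ e / t_1`. -/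
theorem stmt14 (t : ℕ → ℝ) (ht : IsTargetDist t) (M : ℕ) (hM : 0 < M)
    (p : ℕ → ℝ) (hp : IsMType M p)
    (hopt : ∀ q, IsMType M q → klE p t ≤ klE q t) :
    (∀ i, 0 < p i → p i / t i < Real.exp 1 / t 0) ∧
    ∀ k, 0 < p k → (∀ j, k < j → p j = 0) →
      1 / ((M : ℝ) * t k) ≤ Real.exp 1 / t 0 :=
  stmt14_general t ht M p hp hopt
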